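/- arXiv:1904.05416 — 6 statements merged into one kernel-verified Lean document; each statement's English description precedes it below -/
import Mathlib

section
/- If a one-sided p-value function p(x, β₀) for testing H₀: β ≤ β₀ has compatible inferences with a family of nested confidence intervals, then p is coherent: p(x, β₀*) ≥ p(x, β₀) whenever β₀* ≥ β₀ (the p-value is non-decreasing as the null hypothesis space expands). -/
/-- If a one-sided p-value function `p x β₀` for testing
`H₀ : β ≤ β₀` has compatible inferences with a family of nested (one-sided)
confidence intervals, then `p` is coherent: `p x β₀` is non-decreasing in `β₀`
(the p-value does not decrease as the null hypothesis space expands).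
For one-sided tests of `H₀ : β ≤ β₀` the confidence sets are upper sets
(intervals of the form `(L, ∞)`). -/
theorem compatible_nested_implies_coherent
    {Ω : Type*} (p : Ω → ℝ → ℝ) (CI : Ω → ℝ → Set ℝ)
    (hp : ∀ x β₀, p x β₀ ∈ Set.Icc (0 : ℝ) 1)
    (hcompat : ∀ x : Ω, ∀ α ∈ Set.Ioo (0 : ℝ) 1, ∀ β₀ : ℝ,
      (p x β₀ ≤ α ↔ β₀ ∉ CI x α))
    (hnested : ∀ x : Ω, ∀ α₁ ∈ Set.Ioo (0 : ℝ) 1, ∀ α₂ ∈ Set.Ioo (0 : ℝ) 1,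
      α₁ < α₂ → CI x α₂ ⊆ CI x α₁)
    (honesided : ∀ x : Ω, ∀ α ∈ Set.Ioo (0 : ℝ) 1, IsUpperSet (CI x α)) :
    ∀ x : Ω, ∀ β₀ β₀' : ℝ, β₀ ≤ β₀' → p x β₀ ≤ p x β₀' := by
  intro x β₀ β₀' hle
  by_contra h
  push_neg at h
  set α := (p x β₀' + p x β₀) / 2 with hα
  have h0 := hp x β₀
  have h0' := hp x β₀'
  have hα1 : α < 1 := by
    have : α < p x β₀ := by dsimp [α]; linarith
    linarith [h0.2]
  have hα0 : 0 < α := by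
    have : p x β₀' < α := by dsimp [α]; linarith
    linarith [h0'.1]
  have hmem : α ∈ Set.Ioo (0:ℝ) 1 := ⟨hα0, hα1⟩
  have h1 : β₀' ∉ CI x α := (hcompat x α hmem β₀').mp (by dsimp [α]; linarith)
  have h2 : β₀ ∈ CI x α := by
    by_contra hc
    have := (hcompat x α hmem β₀).mpr hc
    dsimp [α] at this; linarith
  exact h1 (honesided x α hmem hle h2)
end

section
/- The exact unconditional one-sided p-value satisfies sup_{θ ∈ Θ₀} P_θ[p_U(X, β₀) ≤ p_U(x, β₀)] = p_U(x, β₀) for all x, i.e., it is exact in the sense of attaining its own tail probability supremum. -/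
open scoped Classical

/-- The exact unconditional one-sided p-value
`p_U(x, β₀) = sup_{θ ∈ Θ₀} P_θ[T(X) ≤ T(x)]` (with `Θ₀ = {θ : b(θ) ≥ β₀}`,
supremum assumed attained) is exact in the sense of Ripamonti et al.:
`sup_{θ ∈ Θ₀} P_θ[p_U(X, β₀) ≤ p_U(x, β₀)] = p_U(x, β₀)` for all `x`. -/
theorem unconditional_pvalue_exact
    {Ω Θ : Type*} [Fintype Ω]
    (f : Θ → Ω → ℝ)
    (hf0 : ∀ θ x, 0 ≤ f θ x)
    (hf1 : ∀ θ, ∑ x, f θ x = 1)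
    (b : Θ → ℝ) (β₀ : ℝ) (T : Ω → ℝ)
    (hne : ∃ θ : Θ, β₀ ≤ b θ)
    (pU : Ω → ℝ)
    (hpU : ∀ x : Ω, pU x =
      sSup {r : ℝ | ∃ θ : Θ, β₀ ≤ b θ ∧ r = ∑ y : Ω, if T y ≤ T x then f θ y else 0})
    -- the supremum defining pU is attained
    (hattain : ∀ x : Ω, ∃ θ : Θ, β₀ ≤ b θ ∧
      (∑ y : Ω, if T y ≤ T x then f θ y else 0) = pU x) :
    ∀ x : Ω,
      sSup {r : ℝ | ∃ θ : Θ, β₀ ≤ b θ ∧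
        r = ∑ y : Ω, if pU y ≤ pU x then f θ y else 0} = pU x := by
  intro x
  -- monotone comparison of indicator sums
  have hmono : ∀ (θ : Θ) (P Q : Ω → Prop) (_ : ∀ y, P y → Q y),
      (∑ y : Ω, if P y then f θ y else 0) ≤ ∑ y : Ω, if Q y then f θ y else 0 := by
    intro θ P Q hPQ
    apply Finset.sum_le_sum
    intro y _
    by_cases h : P y
    · simp [h, hPQ y h]
    · simp [h]; split <;> [exact hf0 θ y; exact le_refl 0]
  -- each tail probability is ≤ pU z (membership in the sup)
  have hle_pU : ∀ (θ : Θ) (_ : β₀ ≤ b θ) (z : Ω),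
      (∑ y : Ω, if T y ≤ T z then f θ y else 0) ≤ pU z := by
    intro θ hθ z
    rw [hpU z]
    apply le_csSup
    · refine ⟨1, ?_⟩
      rintro r ⟨θ', _, rfl⟩
      calc (∑ y : Ω, if T y ≤ T z then f θ' y else 0) ≤ ∑ y : Ω, f θ' y := by
            apply Finset.sum_le_sum; intro y _
            split <;> [exact le_refl _; exact hf0 θ' y]
        _ = 1 := hf1 θ'
    · exact ⟨θ, hθ, rfl⟩
  -- monotonicity of pU in T
  have hpUmono : ∀ y z : Ω, T y ≤ T z → pU y ≤ pU z := by
    intro y z hyz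
    rw [hpU y]
    apply csSup_le
    · obtain ⟨θ, hθ⟩ := hne
      exact ⟨_, θ, hθ, rfl⟩
    · rintro r ⟨θ, hθ, rfl⟩
      calc (∑ w : Ω, if T w ≤ T y then f θ w else 0)
          ≤ ∑ w : Ω, if T w ≤ T z then f θ w else 0 :=
            hmono θ _ _ (fun w hw => le_trans hw hyz)
        _ ≤ pU z := hle_pU θ hθ z
  -- maximizer of T on the event {pU ≤ pU x}
  obtain ⟨y', hy'mem, hy'max⟩ :=
    Finset.exists_max_image (Finset.univ.filter (fun y : Ω => pU y ≤ pU x)) T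
      ⟨x, by simp⟩
  have hy' : pU y' ≤ pU x := (Finset.mem_filter.mp hy'mem).2
  -- upper bound: every element of the set is ≤ pU x
  have hub : ∀ r ∈ {r : ℝ | ∃ θ : Θ, β₀ ≤ b θ ∧
      r = ∑ y : Ω, if pU y ≤ pU x then f θ y else 0}, r ≤ pU x := by
    rintro r ⟨θ, hθ, rfl⟩
    calc (∑ y : Ω, if pU y ≤ pU x then f θ y else 0)
        ≤ ∑ y : Ω, if T y ≤ T y' then f θ y else 0 := by
          apply hmono
          intro y hy
          exact hy'max y (Finset.mem_filter.mpr ⟨Finset.mem_univ y, hy⟩)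
      _ ≤ pU y' := hle_pU θ hθ y'
      _ ≤ pU x := hy'
  -- the value pU x is attained in the set
  obtain ⟨θ₀, hθ₀, hθ₀eq⟩ := hattain x
  have hmem : pU x ∈ {r : ℝ | ∃ θ : Θ, β₀ ≤ b θ ∧
      r = ∑ y : Ω, if pU y ≤ pU x then f θ y else 0} := by
    refine ⟨θ₀, hθ₀, ?_⟩
    have h1 : (∑ y : Ω, if T y ≤ T x then f θ₀ y else 0)
        ≤ ∑ y : Ω, if pU y ≤ pU x then f θ₀ y else 0 :=
      hmono θ₀ _ _ (fun y hy => hpUmono y x hy)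
    have h2 : (∑ y : Ω, if pU y ≤ pU x then f θ₀ y else 0) ≤ pU x :=
      hub _ ⟨θ₀, hθ₀, rfl⟩
    linarith
  exact le_antisymm (csSup_le ⟨_, hmem⟩ hub) (le_csSup ⟨pU x, hub⟩ hmem)
end

section
/- If T* is a refinement of T (i.e., T*(x) < T*(y) whenever T(x) < T(y), so T* breaks some ties of T without changing the order of untied points), then the exact unconditional one-sided p-value based on T* is less than or equal to the one based on T at every data point: p_U^{T*}(x, β₀) ≤ p_U^{T}(x, β₀) for all x. -/
open scoped Classical

/-- If `T*` is a refinement of `T` (it breaks ties of `T` without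
changing the order of untied points: `T x < T y → T* x < T* y`), then the exact
unconditional one-sided p-value based on `T*` is less than or equal to the one
based on `T` at every data point. -/
theorem refinement_pvalue_le
    {Ω Θ : Type*} [Fintype Ω]
    (f : Θ → Ω → ℝ)
    (hf0 : ∀ θ x, 0 ≤ f θ x)
    (hf1 : ∀ θ, ∑ x, f θ x = 1)
    (b : Θ → ℝ) (β₀ : ℝ) (T Tstar : Ω → ℝ)
    (hrefine : ∀ x y : Ω, T x < T y → Tstar x < Tstar y) :
    ∀ x : Ω,
      (⨆ θ : {θ : Θ // β₀ ≤ b θ}, ∑ y : Ω, if Tstar y ≤ Tstar x then f θ.1 y else 0)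
        ≤ ⨆ θ : {θ : Θ // β₀ ≤ b θ}, ∑ y : Ω, if T y ≤ T x then f θ.1 y else 0 := by
  intro x
  apply ciSup_mono
  · refine ⟨1, ?_⟩
    rintro r ⟨θ, rfl⟩
    calc (∑ y : Ω, if T y ≤ T x then f θ.1 y else 0) ≤ ∑ y, f θ.1 y := by
          apply Finset.sum_le_sum
          intro y _
          split <;> simp [hf0]
      _ = 1 := hf1 θ.1
  · intro θ
    apply Finset.sum_le_sum
    intro y _
    by_cases h : Tstar y ≤ Tstar x
    · have hT : T y ≤ T x := le_of_not_gt fun hlt => absurd (hrefine x y hlt) (not_lt.mpr h)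
      simp [h, hT]
    · simp only [h, if_false]
      split <;> simp [hf0]
end

section
/- Let A ⊆ {0,…,n₁} × {0,…,n₂} be a north-west closed set, and let X₁ ~ Binomial(n₁, θ₁) and X₂ ~ Binomial(n₂, θ₂) be independent. Then the probability of A under Binomial(n₁, θ₁) ⊗ Binomial(n₂, θ₂) is non-increasing in θ₁ and non-decreasing in θ₂. -/
open scoped Classical

/-- Binomial probability mass function. -/
noncomputable def binomProb (n : ℕ) (θ : ℝ) (k : ℕ) : ℝ :=
  (n.choose k : ℝ) * θ ^ k * (1 - θ) ^ (n - k)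

/-- Probability of a set `A` under independent `Binomial(n₁,θ₁) ⊗ Binomial(n₂,θ₂)`. -/
noncomputable def jointBinomProb (n₁ n₂ : ℕ) (θ₁ θ₂ : ℝ) (A : Set (ℕ × ℕ)) : ℝ :=
  ∑ x₁ ∈ Finset.range (n₁ + 1), ∑ x₂ ∈ Finset.range (n₂ + 1),
    if (x₁, x₂) ∈ A then binomProb n₁ θ₁ x₁ * binomProb n₂ θ₂ x₂ else 0

noncomputable def binomExp (n : ℕ) (θ : ℝ) (g : ℕ → ℝ) : ℝ :=
  ∑ k ∈ Finset.range (n + 1), binomProb n θ k * g k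

lemma binomProb_nonneg {n : ℕ} {θ : ℝ} (h0 : 0 ≤ θ) (h1 : θ ≤ 1) (k : ℕ) :
    0 ≤ binomProb n θ k := by
  unfold binomProb
  have h1' : (0:ℝ) ≤ 1 - θ := by linarith
  exact mul_nonneg (mul_nonneg (Nat.cast_nonneg _) (pow_nonneg h0 _)) (pow_nonneg h1' _)

lemma binomExp_rec (n : ℕ) (θ : ℝ) (g : ℕ → ℝ) :
    binomExp (n + 1) θ g =
      θ * binomExp n θ (fun k => g (k + 1)) + (1 - θ) * binomExp n θ g := by
  unfold binomExp binomProb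
  rw [Finset.sum_range_succ' (fun k => ((n+1).choose k : ℝ) * θ ^ k * (1 - θ) ^ (n + 1 - k) * g k) (n+1)]
  rw [Finset.mul_sum, Finset.mul_sum,
      Finset.sum_range_succ' (fun k => (1 - θ) * ((n.choose k : ℝ) * θ ^ k * (1 - θ) ^ (n - k) * g k)) n]
  have key : ∀ i ∈ Finset.range (n+1),
      ((n+1).choose (i+1) : ℝ) * θ ^ (i+1) * (1 - θ) ^ (n + 1 - (i+1)) * g (i+1)
      = θ * ((n.choose i : ℝ) * θ ^ i * (1 - θ) ^ (n - i) * g (i+1))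
        + (if i + 1 ≤ n then (1 - θ) * ((n.choose (i+1) : ℝ) * θ ^ (i+1) * (1 - θ) ^ (n - (i+1)) * g (i+1)) else 0) := by
    intro i hi
    have hi' : i ≤ n := Nat.lt_succ_iff.mp (Finset.mem_range.mp hi)
    rw [Nat.choose_succ_succ]
    by_cases h : i + 1 ≤ n
    · have h1 : n + 1 - (i + 1) = (n - (i+1)) + 1 := by omega
      have h1b : n - i = (n - (i+1)) + 1 := by omega
      rw [if_pos h, h1, h1b]
      push_cast
      ring
    · have hin : i = n := by omega
      subst hin
      rw [if_neg h, Nat.choose_succ_self, Nat.sub_self, Nat.sub_self]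
      push_cast
      ring
  rw [Finset.sum_congr rfl key, Finset.sum_add_distrib]
  have h2 : ∑ i ∈ Finset.range (n+1),
      (if i + 1 ≤ n then (1 - θ) * ((n.choose (i+1) : ℝ) * θ ^ (i+1) * (1 - θ) ^ (n - (i+1)) * g (i+1)) else 0)
      = ∑ i ∈ Finset.range n, (1 - θ) * ((n.choose (i+1) : ℝ) * θ ^ (i+1) * (1 - θ) ^ (n - (i+1)) * g (i+1)) := by
    rw [Finset.sum_range_succ, if_neg (by omega)]
    rw [add_zero]
    apply Finset.sum_congr rfl
    intro i hi
    rw [if_pos (by exact Nat.succ_le_of_lt (Finset.mem_range.mp hi))]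
  rw [h2]
  have h0 : ((n+1).choose 0 : ℝ) * θ ^ 0 * (1 - θ) ^ (n + 1 - 0) * g 0
      = (1 - θ) * ((n.choose 0 : ℝ) * θ ^ 0 * (1 - θ) ^ (n - 0) * g 0) := by
    simp [pow_succ]
    ring
  rw [h0]
  ring
lemma binomExp_le_binomExp {n : ℕ} {θ : ℝ} (h0 : 0 ≤ θ) (h1 : θ ≤ 1)
    {g h : ℕ → ℝ} (hgh : ∀ k, g k ≤ h k) :
    binomExp n θ g ≤ binomExp n θ h := by
  apply Finset.sum_le_sum
  intro k _
  exact mul_le_mul_of_nonneg_left (hgh k) (binomProb_nonneg h0 h1 k)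

lemma binomExp_one (n : ℕ) (θ : ℝ) : binomExp n θ (fun _ => 1) = 1 := by
  unfold binomExp binomProb
  have := add_pow θ (1 - θ) n
  simp only [add_sub_cancel, one_pow] at this
  conv_rhs => rw [this]
  apply Finset.sum_congr rfl
  intro k _
  ring

lemma binomExp_mono :
    ∀ n : ℕ, ∀ g : ℕ → ℝ, Monotone g → ∀ θ θ' : ℝ, 0 ≤ θ → θ ≤ θ' → θ' ≤ 1 →
      binomExp n θ g ≤ binomExp n θ' g := by
  intro n
  induction n with
  | zero =>
    intro g hg θ θ' _ _ _
    simp [binomExp, binomProb]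
  | succ n ih =>
    intro g hg θ θ' h0 hle h1
    rw [binomExp_rec, binomExp_rec]
    have hg' : Monotone (fun k => g (k + 1)) := fun a b hab => hg (by omega)
    have hA := ih _ hg' θ θ' h0 hle h1
    have hB := ih g hg θ θ' h0 hle h1
    have hAB : binomExp n θ' g ≤ binomExp n θ' (fun k => g (k + 1)) :=
      binomExp_le_binomExp (le_trans h0 hle) h1 (fun k => hg (Nat.le_succ k))
    nlinarith [mul_nonneg h0 (sub_nonneg.mpr hA),
      mul_nonneg (by linarith : (0:ℝ) ≤ 1 - θ) (sub_nonneg.mpr hB),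
      mul_nonneg (sub_nonneg.mpr hle) (sub_nonneg.mpr hAB)]

lemma binomExp_anti {n : ℕ} {g : ℕ → ℝ} (hg : Antitone g)
    {θ θ' : ℝ} (h0 : 0 ≤ θ) (hle : θ ≤ θ') (h1 : θ' ≤ 1) :
    binomExp n θ' g ≤ binomExp n θ g := by
  have key : ∀ τ : ℝ, binomExp n τ g = 1 - binomExp n τ (fun k => 1 - g k) := by
    intro τ
    have hsplit : binomExp n τ (fun k => 1 - g k)
        = binomExp n τ (fun _ => (1:ℝ)) - binomExp n τ g := by
      unfold binomExp
      rw [← Finset.sum_sub_distrib]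
      apply Finset.sum_congr rfl
      intro k _
      ring
    rw [hsplit, binomExp_one]
    ring
  rw [key θ, key θ']
  have hmono : Monotone (fun k => 1 - g k) := fun a b hab => by
    simp only
    linarith [hg hab]
  linarith [binomExp_mono n _ hmono θ θ' h0 hle h1]

/-- The probability of a north-west closed set
`A ⊆ {0,…,n₁} × {0,…,n₂}` under `Binomial(n₁,θ₁) ⊗ Binomial(n₂,θ₂)` is
non-increasing in `θ₁` and non-decreasing in `θ₂`. -/
theorem northwest_closed_prob_monotone
    (n₁ n₂ : ℕ) (A : Set (ℕ × ℕ))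
    -- A is north-west closed
    (hNW2 : ∀ x₁ x₂ : ℕ, (x₁, x₂) ∈ A → x₂ + 1 ≤ n₂ → (x₁, x₂ + 1) ∈ A)
    (hNW1 : ∀ x₁ x₂ : ℕ, (x₁, x₂) ∈ A → 1 ≤ x₁ → (x₁ - 1, x₂) ∈ A) :
    ∀ θ₁ ∈ Set.Icc (0 : ℝ) 1, ∀ θ₁' ∈ Set.Icc (0 : ℝ) 1,
    ∀ θ₂ ∈ Set.Icc (0 : ℝ) 1, ∀ θ₂' ∈ Set.Icc (0 : ℝ) 1,
      (θ₁ ≤ θ₁' → jointBinomProb n₁ n₂ θ₁' θ₂ A ≤ jointBinomProb n₁ n₂ θ₁ θ₂ A) ∧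
      (θ₂ ≤ θ₂' → jointBinomProb n₁ n₂ θ₁ θ₂ A ≤ jointBinomProb n₁ n₂ θ₁ θ₂' A) := by
  intro θ₁ h₁ θ₁' h₁' θ₂ h₂ θ₂' h₂'
  -- upward closure in the second coordinate
  have up2 : ∀ x₁ m m' : ℕ, m ≤ m' → (x₁, m) ∈ A → m' ≤ n₂ → (x₁, m') ∈ A := by
    intro x₁ m m' h hmem
    induction m', h using Nat.le_induction with
    | base => intro _; exact hmem
    | succ k hk ih => intro hkn; exact hNW2 _ _ (ih (by omega)) hkn
  -- downward closure in the first coordinate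
  have down1 : ∀ x₂ m d : ℕ, (m, x₂) ∈ A → (m - d, x₂) ∈ A := by
    intro x₂ m d hmem
    induction d with
    | zero => simpa using hmem
    | succ d ih =>
      by_cases h : m - d = 0
      · have hm : m - (d + 1) = m - d := by omega
        rw [hm]; exact ih
      · have hm : m - (d + 1) = (m - d) - 1 := by omega
        rw [hm]; exact hNW1 _ _ ih (by omega)
  have hgmono : ∀ x₁ : ℕ,
      Monotone (fun k => if (x₁, min k n₂) ∈ A then (1:ℝ) else 0) := by
    intro x₁ a b hab
    dsimp only
    by_cases ha : (x₁, min a n₂) ∈ A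
    · have hb : (x₁, min b n₂) ∈ A :=
        up2 x₁ _ _ (by omega) ha (by omega)
      simp [ha, hb]
    · simp only [ha, if_false]
      split_ifs <;> norm_num
  have hhanti : ∀ x₂ : ℕ,
      Antitone (fun k => if (min k n₁, x₂) ∈ A then (1:ℝ) else 0) := by
    intro x₂ a b hab
    dsimp only
    by_cases hb : (min b n₁, x₂) ∈ A
    · have hm : min a n₁ = min b n₁ - (min b n₁ - min a n₁) := by omega
      have ha : (min a n₁, x₂) ∈ A := by rw [hm]; exact down1 _ _ _ hb
      simp [ha, hb]
    · simp only [hb, if_false]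
      split_ifs <;> norm_num
  have rep2 : ∀ τ₁ τ₂ : ℝ, jointBinomProb n₁ n₂ τ₁ τ₂ A =
      ∑ x₁ ∈ Finset.range (n₁ + 1), binomProb n₁ τ₁ x₁ *
        binomExp n₂ τ₂ (fun k => if (x₁, min k n₂) ∈ A then (1:ℝ) else 0) := by
    intro τ₁ τ₂
    unfold jointBinomProb binomExp
    apply Finset.sum_congr rfl
    intro x₁ _
    rw [Finset.mul_sum]
    apply Finset.sum_congr rfl
    intro x₂ hx₂
    have hx : min x₂ n₂ = x₂ := by
      have := Finset.mem_range.mp hx₂; omega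
    dsimp only
    rw [hx]
    split_ifs with h <;> ring
  have rep1 : ∀ τ₁ τ₂ : ℝ, jointBinomProb n₁ n₂ τ₁ τ₂ A =
      ∑ x₂ ∈ Finset.range (n₂ + 1), binomProb n₂ τ₂ x₂ *
        binomExp n₁ τ₁ (fun k => if (min k n₁, x₂) ∈ A then (1:ℝ) else 0) := by
    intro τ₁ τ₂
    unfold jointBinomProb binomExp
    rw [Finset.sum_comm]
    apply Finset.sum_congr rfl
    intro x₂ hx₂
    rw [Finset.mul_sum]
    apply Finset.sum_congr rfl
    intro x₁ hx₁
    have hx : min x₁ n₁ = x₁ := by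
      have := Finset.mem_range.mp hx₁; omega
    dsimp only
    rw [hx]
    split_ifs with h <;> ring
  constructor
  · intro hle
    rw [rep1 θ₁' θ₂, rep1 θ₁ θ₂]
    apply Finset.sum_le_sum
    intro x₂ _
    exact mul_le_mul_of_nonneg_left
      (binomExp_anti (hhanti x₂) h₁.1 hle h₁'.2)
      (binomProb_nonneg h₂.1 h₂.2 _)
  · intro hle
    rw [rep2 θ₁ θ₂, rep2 θ₁ θ₂']
    apply Finset.sum_le_sum
    intro x₁ _
    exact mul_le_mul_of_nonneg_left
      (binomExp_mono n₂ _ (hgmono x₁) θ₂ θ₂' h₂.1 hle h₂'.2)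
      (binomProb_nonneg h₁.1 h₁.2 _)
end

section
/- For the noncentral (extended) hypergeometric distribution with fixed margins n₁, n₂, s and odds ratio parameter ψ > 0, the upper tail probability P_ψ[X₂ ≥ x₂ | S = s] is non-decreasing in ψ for each fixed x₂; hence, for testing H₀: ψ ≤ ψ₀, the conditional p-value sup_{ψ ≤ ψ₀} P_ψ[X₂ ≥ x₂ | S=s] equals P_{ψ₀}[X₂ ≥ x₂ | S=s]. -/
/-- Unnormalized weight of the extended (noncentral) hypergeometric distribution
with margins `n₁, n₂, s` and odds-ratio parameter `ψ`. -/
noncomputable def ehgWeight (n₁ n₂ s : ℕ) (ψ : ℝ) (k : ℕ) : ℝ :=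
  (n₂.choose k : ℝ) * (n₁.choose (s - k) : ℝ) * ψ ^ k

/-- Upper tail probability `P_ψ[X₂ ≥ x₂ | S = s]` of the extended hypergeometric
distribution. (Terms outside the support vanish since the binomial coefficients
are zero there.) -/
noncomputable def ehgTail (n₁ n₂ s : ℕ) (ψ : ℝ) (x₂ : ℕ) : ℝ :=
  (∑ k ∈ Finset.Icc x₂ (min n₂ s), ehgWeight n₁ n₂ s ψ k) /
    (∑ k ∈ Finset.Icc 0 (min n₂ s), ehgWeight n₁ n₂ s ψ k)

lemma ehg_weight_nonneg (n₁ n₂ s : ℕ) {ψ : ℝ} (hψ : 0 ≤ ψ) (k : ℕ) :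
    0 ≤ ehgWeight n₁ n₂ s ψ k := by
  unfold ehgWeight; positivity

lemma ehg_total_pos (n₁ n₂ s : ℕ) (hs : s ≤ n₁ + n₂) {ψ : ℝ} (hψ : 0 < ψ) :
    0 < ∑ k ∈ Finset.Icc 0 (min n₂ s), ehgWeight n₁ n₂ s ψ k := by
  apply Finset.sum_pos' (fun k _ => ehg_weight_nonneg n₁ n₂ s hψ.le k)
  refine ⟨s - min s n₁, ?_, ?_⟩
  · simp only [Finset.mem_Icc, Nat.zero_le, true_and, le_min_iff]
    constructor
    · omega
    · omega
  · unfold ehgWeight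
    have h1 : s - min s n₁ ≤ n₂ := by omega
    have h2 : s - (s - min s n₁) = min s n₁ := by omega
    rw [h2]
    have c1 : 0 < (n₂.choose (s - min s n₁) : ℝ) := by
      exact_mod_cast Nat.choose_pos h1
    have c2 : 0 < (n₁.choose (min s n₁) : ℝ) := by
      exact_mod_cast Nat.choose_pos (min_le_right s n₁)
    positivity

lemma ehg_key (n₁ n₂ s x₂ : ℕ) {ψ ψ' : ℝ} (hψ : 0 ≤ ψ) (h : ψ ≤ ψ') :
    (∑ k ∈ Finset.Icc x₂ (min n₂ s), ehgWeight n₁ n₂ s ψ k) *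
      (∑ k ∈ Finset.Icc 0 (min n₂ s), ehgWeight n₁ n₂ s ψ' k) ≤
    (∑ k ∈ Finset.Icc x₂ (min n₂ s), ehgWeight n₁ n₂ s ψ' k) *
      (∑ k ∈ Finset.Icc 0 (min n₂ s), ehgWeight n₁ n₂ s ψ k) := by
  set m := min n₂ s
  set I := Finset.Icc x₂ m
  set J := Finset.Icc 0 m
  have hIJ : I ⊆ J := Finset.Icc_subset_Icc (Nat.zero_le _) le_rfl
  set t : ℕ → ℕ → ℝ := fun k j =>
    ehgWeight n₁ n₂ s ψ' k * ehgWeight n₁ n₂ s ψ j -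
    ehgWeight n₁ n₂ s ψ k * ehgWeight n₁ n₂ s ψ' j with ht
  have hanti : ∀ k j, t k j = - t j k := by intro k j; simp [ht]; ring
  suffices hsum : 0 ≤ ∑ k ∈ I, ∑ j ∈ J, t k j by
    have : ∑ k ∈ I, ∑ j ∈ J, t k j =
        (∑ k ∈ I, ehgWeight n₁ n₂ s ψ' k) * (∑ j ∈ J, ehgWeight n₁ n₂ s ψ j) -
        (∑ k ∈ I, ehgWeight n₁ n₂ s ψ k) * (∑ j ∈ J, ehgWeight n₁ n₂ s ψ' j) := by
      simp only [ht, Finset.sum_sub_distrib, Finset.mul_sum, Finset.sum_mul]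
      congr 1 <;> rw [Finset.sum_comm]
    linarith [this ▸ hsum]
  have hsplit : ∑ k ∈ I, ∑ j ∈ J, t k j =
      (∑ k ∈ I, ∑ j ∈ I, t k j) + ∑ k ∈ I, ∑ j ∈ J \ I, t k j := by
    rw [← Finset.sum_add_distrib]
    apply Finset.sum_congr rfl
    intro k _
    rw [← Finset.sum_union disjoint_sdiff_self_right, Finset.union_sdiff_of_subset hIJ]
  have hzero : ∑ k ∈ I, ∑ j ∈ I, t k j = 0 := by
    have h1 : ∑ k ∈ I, ∑ j ∈ I, t k j = ∑ j ∈ I, ∑ k ∈ I, t k j := Finset.sum_comm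
    have h2 : ∑ j ∈ I, ∑ k ∈ I, t k j = - ∑ k ∈ I, ∑ j ∈ I, t k j := by
      rw [← Finset.sum_neg_distrib]
      apply Finset.sum_congr rfl
      intro j _
      rw [← Finset.sum_neg_distrib]
      exact Finset.sum_congr rfl fun k _ => (hanti k j).symm ▸ rfl
    linarith [h1.trans h2]
  rw [hsplit, hzero, zero_add]
  apply Finset.sum_nonneg
  intro k hk
  apply Finset.sum_nonneg
  intro j hj
  have hkx : x₂ ≤ k := (Finset.mem_Icc.mp hk).1
  have hjx : j < x₂ := by
    rcases Finset.mem_sdiff.mp hj with ⟨hjJ, hjI⟩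
    have hjm := (Finset.mem_Icc.mp hjJ).2
    by_contra hcon
    exact hjI (Finset.mem_Icc.mpr ⟨le_of_not_gt hcon, hjm⟩)
  have hjk : j ≤ k := le_of_lt (lt_of_lt_of_le hjx hkx)
  simp only [ht, ehgWeight]
  have hψ' : 0 ≤ ψ' := hψ.trans h
  have hpow : ψ ^ k * ψ' ^ j ≤ ψ' ^ k * ψ ^ j := by
    obtain ⟨d, rfl⟩ := Nat.exists_eq_add_of_le hjk
    rw [pow_add, pow_add]
    have hd : ψ ^ d ≤ ψ' ^ d := pow_le_pow_left₀ hψ h d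
    calc ψ ^ j * ψ ^ d * ψ' ^ j = (ψ * ψ') ^ j * ψ ^ d := by rw [mul_pow]; ring
      _ ≤ (ψ * ψ') ^ j * ψ' ^ d := by
          apply mul_le_mul_of_nonneg_left hd; positivity
      _ = ψ' ^ j * ψ' ^ d * ψ ^ j := by rw [mul_pow]; ring
  have hc : 0 ≤ (n₂.choose k : ℝ) * (n₁.choose (s - k) : ℝ) *
      ((n₂.choose j : ℝ) * (n₁.choose (s - j) : ℝ)) := by positivity
  nlinarith [mul_le_mul_of_nonneg_left hpow hc]

/-- For the extended hypergeometric distribution with fixed margins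
`n₁, n₂, s` and odds ratio `ψ > 0`, the upper tail probability `P_ψ[X₂ ≥ x₂ | S = s]`
is non-decreasing in `ψ`; in particular, for testing `H₀ : ψ ≤ ψ₀` the conditional
p-value `sup_{0 < ψ ≤ ψ₀} P_ψ[X₂ ≥ x₂ | S = s]` is attained at, and equals,
`P_{ψ₀}[X₂ ≥ x₂ | S = s]`. -/
theorem extendedHypergeometric_tail_monotone
    (n₁ n₂ s x₂ : ℕ) (hs : s ≤ n₁ + n₂) :
    (∀ ψ ψ' : ℝ, 0 < ψ → ψ ≤ ψ' → ehgTail n₁ n₂ s ψ x₂ ≤ ehgTail n₁ n₂ s ψ' x₂) ∧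
    (∀ ψ₀ : ℝ, 0 < ψ₀ →
      IsGreatest {r : ℝ | ∃ ψ : ℝ, 0 < ψ ∧ ψ ≤ ψ₀ ∧ r = ehgTail n₁ n₂ s ψ x₂}
        (ehgTail n₁ n₂ s ψ₀ x₂)) := by
  have mono : ∀ ψ ψ' : ℝ, 0 < ψ → ψ ≤ ψ' →
      ehgTail n₁ n₂ s ψ x₂ ≤ ehgTail n₁ n₂ s ψ' x₂ := by
    intro ψ ψ' hψ hle
    have hψ' : 0 < ψ' := lt_of_lt_of_le hψ hle
    unfold ehgTail
    rw [div_le_div_iff₀ (ehg_total_pos n₁ n₂ s hs hψ) (ehg_total_pos n₁ n₂ s hs hψ')]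
    exact ehg_key n₁ n₂ s x₂ hψ.le hle
  refine ⟨mono, fun ψ₀ hψ₀ => ⟨⟨ψ₀, hψ₀, le_rfl, rfl⟩, ?_⟩⟩
  rintro r ⟨ψ, hψ, hle, rfl⟩
  exact mono ψ ψ₀ hψ hle
end

section
/- Let U_or ≥ 1. If θ₁, θ₂ ∈ [0,1] are such that the odds ratio θ₂(1−θ₁)/(θ₁(1−θ₂)) ≤ U_or, then θ₂ − θ₁ ≤ (√U_or − 1)/(√U_or + 1); moreover this bound is attained (at θ₁ = 1/(1+√U_or), θ₂ = √U_or/(1+√U_or)). -/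
open Real

/-!
Write `d = θ₂ - θ₁`. For a fixed difference `d ≥ 0`, the odds ratio is smallest when `θ₁` and `θ₂`
are symmetric about `1/2`, where it equals `((1 + d)/(1 - d))²`: the polynomial identity
`θ₂(1-θ₁)(1-d)² - (1+d)²θ₁(1-θ₂) = d(1-θ₁-θ₂)²` says exactly this. Hence an odds ratio at most
`U = s²` forces `(1 + d)/(1 - d) ≤ s`, that is `d ≤ (s - 1)/(s + 1)`, with equality at the
symmetric pair.
-/

section OrderedField

variable {K : Type*} [Field K] [LinearOrder K] [IsStrictOrderedRing K]

theorem one_add_sub_sq_mul_le {x y : K} (hxy : x ≤ y) :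
    (1 + (y - x)) ^ 2 * (x * (1 - y)) ≤ y * (1 - x) * (1 - (y - x)) ^ 2 := by
  have key : y * (1 - x) * (1 - (y - x)) ^ 2 - (1 + (y - x)) ^ 2 * (x * (1 - y))
      = (y - x) * (1 - x - y) ^ 2 := by ring
  have := mul_nonneg (sub_nonneg.2 hxy) (sq_nonneg (1 - x - y))
  linarith

theorem one_add_sub_le_mul_one_sub_sub {x y s : K} (hx : 0 ≤ x) (hy : y ≤ 1) (hxy : x < y)
    (hs : 0 ≤ s) (h : y * (1 - x) ≤ s ^ 2 * (x * (1 - y))) :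
    1 + (y - x) ≤ s * (1 - (y - x)) := by
  have hpos : 0 < x * (1 - y) :=
    pos_of_mul_pos_right ((mul_pos (by linarith) (by linarith)).trans_le h) (sq_nonneg s)
  have hsq : (1 + (y - x)) ^ 2 ≤ (s * (1 - (y - x))) ^ 2 := by
    refine le_of_mul_le_mul_right ?_ hpos
    calc (1 + (y - x)) ^ 2 * (x * (1 - y)) ≤ y * (1 - x) * (1 - (y - x)) ^ 2 :=
          one_add_sub_sq_mul_le hxy.le
      _ ≤ s ^ 2 * (x * (1 - y)) * (1 - (y - x)) ^ 2 := by gcongr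
      _ = (s * (1 - (y - x))) ^ 2 * (x * (1 - y)) := by ring
  exact (pow_le_pow_iff_left₀ (by linarith) (mul_nonneg hs (by linarith)) two_ne_zero).1 hsq

theorem sub_le_div_of_mul_one_sub_le {x y s : K} (hx : 0 ≤ x) (hy : y ≤ 1) (hs : 1 ≤ s)
    (h : y * (1 - x) ≤ s ^ 2 * (x * (1 - y))) :
    y - x ≤ (s - 1) / (s + 1) := by
  rcases le_or_gt y x with hyx | hxy
  · exact (sub_nonpos.2 hyx).trans (div_nonneg (by linarith) (by linarith))
  · rw [le_div_iff₀ (by linarith)]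
    linarith [one_add_sub_le_mul_one_sub_sub hx hy hxy (by linarith) h]

theorem div_one_add_mul_one_sub_eq {s : K} (hs : 0 ≤ s) :
    s / (1 + s) * (1 - 1 / (1 + s)) = s ^ 2 * (1 / (1 + s) * (1 - s / (1 + s))) := by
  have : 1 + s ≠ 0 := by positivity
  field_simp
  ring

end OrderedField

/-- Let `U_or ≥ 1`. If `θ₁, θ₂ ∈ [0,1]` have odds ratio at most
`U_or` (stated multiplicatively as `θ₂(1−θ₁) ≤ U_or · θ₁(1−θ₂)`), then
`θ₂ − θ₁ ≤ (√U_or − 1)/(√U_or + 1)`; moreover this bound is attained at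
`θ₁ = 1/(1+√U_or)`, `θ₂ = √U_or/(1+√U_or)`. -/
theorem oddsRatio_bound_difference (U : ℝ) (hU : 1 ≤ U) :
    (∀ θ₁ ∈ Set.Icc (0 : ℝ) 1, ∀ θ₂ ∈ Set.Icc (0 : ℝ) 1,
      θ₂ * (1 - θ₁) ≤ U * (θ₁ * (1 - θ₂)) →
      θ₂ - θ₁ ≤ (Real.sqrt U - 1) / (Real.sqrt U + 1)) ∧
    ((Real.sqrt U / (1 + Real.sqrt U)) * (1 - 1 / (1 + Real.sqrt U))
        ≤ U * ((1 / (1 + Real.sqrt U)) * (1 - Real.sqrt U / (1 + Real.sqrt U))) ∧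
      Real.sqrt U / (1 + Real.sqrt U) - 1 / (1 + Real.sqrt U)
        = (Real.sqrt U - 1) / (Real.sqrt U + 1)) := by
  have hs : 1 ≤ √U := Real.one_le_sqrt.2 hU
  have hsq : √U ^ 2 = U := Real.sq_sqrt (by linarith)
  refine ⟨fun θ₁ h₁ θ₂ h₂ h => sub_le_div_of_mul_one_sub_le h₁.1 h₂.2 hs (by rwa [hsq]), ?_, ?_⟩
  · rw [div_one_add_mul_one_sub_eq (by linarith), hsq]
  · rw [div_sub_div_same, add_comm 1]
end
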